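/- arXiv:0901.2358 — 2 statements merged into one kernel-verified Lean document; each statement's English description precedes it below -/
import Mathlib

section
/- For all t > 0 and k > 0, the mode function v(t,k) solves the radial de Sitter Klein–Gordon ODE: t²·∂²v/∂t²(t,k) − 2t·∂v/∂t(t,k) + ((kt)² + (mR)²)·v(t,k) = 0. -/
open Complex MeasureTheory Filter
open scoped RealInnerProductSpace

noncomputable section

/-- Three-dimensional Euclidean space. -/
abbrev V3 : Type := EuclideanSpace ℝ (Fin 3)

/-- The Bessel function of complex order `α`:
`J_α(x) = Σ_{n=0}^∞ ((−1)^n/(n!·Γ(α+n+1)))·exp((α+2n)·log(x/2))`. -/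
def besselJ (α : ℂ) (x : ℝ) : ℂ :=
  ∑' n : ℕ, ((-1 : ℂ) ^ n / ((n.factorial : ℂ) * Complex.Gamma (α + (n : ℂ) + 1))) *
    Complex.exp ((α + 2 * (n : ℂ)) * (Real.log (x / 2) : ℂ))

/-- The Hankel function of the first kind. -/
def hankel1 (α : ℂ) (x : ℝ) : ℂ :=
  (besselJ (-α) x - Complex.exp (-(Complex.I * (Real.pi : ℂ) * α)) * besselJ α x) /
    (Complex.I * Complex.sin (α * (Real.pi : ℂ)))

/-- The Hankel function of the second kind. -/
def hankel2 (α : ℂ) (x : ℝ) : ℂ :=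
  (Complex.exp (Complex.I * (Real.pi : ℂ) * α) * besselJ α x - besselJ (-α) x) /
    (Complex.I * Complex.sin (α * (Real.pi : ℂ)))

/-- `μ = √((mR)² − 9/4)`. -/
def modeMu (m R : ℝ) : ℝ := Real.sqrt ((m * R) ^ 2 - 9 / 4)

/-- `ν = iμ`. -/
def modeNu (m R : ℝ) : ℂ := Complex.I * (modeMu m R : ℂ)

/-- The mode function `v(t,k) = e^{−μπ/2}·t^{3/2}·H^{(1)}_ν(kt)`. -/
def modeV (m R t k : ℝ) : ℂ :=
  (Real.exp (-(modeMu m R * Real.pi / 2)) : ℂ) * ((t ^ ((3 : ℝ) / 2) : ℝ) : ℂ) *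
    hankel1 (modeNu m R) (k * t)

/-- `v′(t,k) = ∂v/∂t (t,k)`. -/
def modeV' (m R t k : ℝ) : ℂ := deriv (fun s => modeV m R s k) t

/-- `ω(k) = √(1+k²)`. -/
def omegaK (k : ℝ) : ℝ := Real.sqrt (1 + k ^ 2)

/-- The Fourier transform on `ℝ³`. -/
def ft (g : V3 → ℂ) (k : V3) : ℂ :=
  (((2 * Real.pi) ^ (-(3 : ℝ) / 2) : ℝ) : ℂ) *
    ∫ x : V3, Complex.exp (-(Complex.I) * (⟪k, x⟫ : ℂ)) * g x

/-- The inverse Fourier transform on `ℝ³`. -/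
def ift (g : V3 → ℂ) (x : V3) : ℂ :=
  (((2 * Real.pi) ^ (-(3 : ℝ) / 2) : ℝ) : ℂ) *
    ∫ k : V3, Complex.exp (Complex.I * (⟪k, x⟫ : ℂ)) * g k

/-- The map `K_t` on the Fourier side, applied to the Fourier transforms `f̃, h̃`
of the Cauchy data:
`K_t(f,h)(k) = (πi/(4t³))·[t·f̃(k)·conj(v′(t,|k|)) − R·h̃(k)·conj(v(t,|k|))]`. -/
def ktAux (m R t : ℝ) (ftil htil : V3 → ℂ) (k : V3) : ℂ :=
  ((Real.pi : ℂ) * Complex.I / (4 * (t : ℂ) ^ 3)) *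
    ((t : ℂ) * ftil k * (starRingEnd ℂ) (modeV' m R t ‖k‖) -
      (R : ℂ) * htil k * (starRingEnd ℂ) (modeV m R t ‖k‖))

/-- `K_t` applied to real Cauchy data `(f,h)`. -/
def ktFun (m R t : ℝ) (f h : V3 → ℝ) : V3 → ℂ :=
  ktAux m R t (ft fun x => (f x : ℂ)) (ft fun x => (h x : ℂ))

/-- The Fourier transform of the first component of the pair `L_tψ`:
`f̃_t(k) = v(t,|k|)·ψ(k) + conj(v(t,|k|))·conj(ψ(−k))`. -/
def ltF (m R t : ℝ) (ψ : V3 → ℂ) (k : V3) : ℂ :=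
  modeV m R t ‖k‖ * ψ k + (starRingEnd ℂ) (modeV m R t ‖k‖) * (starRingEnd ℂ) (ψ (-k))

/-- The Fourier transform of the second component of the pair `L_tψ`:
`h̃_t(k) = (t/R)·[v′(t,|k|)·ψ(k) + conj(v′(t,|k|))·conj(ψ(−k))]`. -/
def ltH (m R t : ℝ) (ψ : V3 → ℂ) (k : V3) : ℂ :=
  ((t / R : ℝ) : ℂ) *
    (modeV' m R t ‖k‖ * ψ k + (starRingEnd ℂ) (modeV' m R t ‖k‖) * (starRingEnd ℂ) (ψ (-k)))

/-- The solution `u(t,x⃗)` built from the coefficient function `ψ`: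
`u(t,x⃗) = (2π)^{−3/2}·∫ e^{ik⃗·x⃗}·[v(t,|k⃗|)·ψ(k⃗) + conj(v(t,|k⃗|))·conj(ψ(−k⃗))] dk⃗`. -/
def uSol (m R : ℝ) (ψ : V3 → ℂ) (t : ℝ) (x : V3) : ℂ :=
  (((2 * Real.pi) ^ (-(3 : ℝ) / 2) : ℝ) : ℂ) *
    ∫ k : V3, Complex.exp (Complex.I * (⟪k, x⟫ : ℂ)) *
      (modeV m R t ‖k‖ * ψ k + (starRingEnd ℂ) (modeV m R t ‖k‖) * (starRingEnd ℂ) (ψ (-k)))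

/-- The spatial Laplacian, as the sum of the second partial derivatives along
the coordinate directions. -/
def lap3 (w : V3 → ℂ) (x : V3) : ℂ :=
  ∑ i : Fin 3, iteratedDeriv 2 (fun s : ℝ => w (x + s • EuclideanSpace.single i (1 : ℝ))) 0

/-- The square of the Sobolev-type norm `‖(f,h)‖_{1/2}`, expressed in terms of the
Fourier transforms `f̃, h̃` of the data:
`‖(f,h)‖_{1/2}² = ∫ ω(|k⃗|)·|f̃(k⃗)|² dk⃗ + ∫ ω(|k⃗|)⁻¹·|h̃(k⃗)|² dk⃗`. -/
def halfNormSq (ftil htil : V3 → ℂ) : ℝ :=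
  (∫ k : V3, omegaK ‖k‖ * ‖ftil k‖ ^ 2) + ∫ k : V3, (omegaK ‖k‖)⁻¹ * ‖htil k‖ ^ 2

/-- The Sobolev-type norm `‖(f,h)‖_{1/2}` (arguments are the Fourier transforms). -/
def halfNorm (ftil htil : V3 → ℂ) : ℝ := Real.sqrt (halfNormSq ftil htil)

/-- The `L²(ℝ³)` norm. -/
def l2Norm (g : V3 → ℂ) : ℝ := Real.sqrt (∫ k : V3, ‖g k‖ ^ 2)

/-- The transformed potential operator `V̂` with (Fourier-transformed) potential `W`:
`(V̂ψ)(k⃗) = −(2π)^{3/2}·R·(πi/4)·conj(v(1,|k⃗|))·(W ∗ g_ψ)(k⃗)` where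
`g_ψ(k⃗) = v(1,|k⃗|)·ψ(k⃗) + conj(v(1,|k⃗|))·conj(ψ(−k⃗))`. -/
def vHatOp (m R : ℝ) (W : V3 → ℂ) (ψ : V3 → ℂ) (k : V3) : ℂ :=
  ((-((2 * Real.pi) ^ ((3 : ℝ) / 2)) * R : ℝ) : ℂ) * ((Real.pi : ℂ) * Complex.I / 4) *
    (starRingEnd ℂ) (modeV m R 1 ‖k‖) * ∫ y : V3, W y * ltF m R 1 ψ (k - y)

/-- The free transformed evolution `Û₀(a,b) = K₁ ∘ L_a ∘ K_b ∘ L₁` on `L²(ℝ³)`. -/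
def u0Hat (m R a b : ℝ) (ψ : V3 → ℂ) : V3 → ℂ :=
  ktAux m R 1 (ltF m R a (ktAux m R b (ltF m R 1 ψ) (ltH m R 1 ψ)))
    (ltH m R a (ktAux m R b (ltF m R 1 ψ) (ltH m R 1 ψ)))

/-- The inner chain `V̂(s)·V̂(s₂)···V̂(s_{j+1})·Û₀(s_{j+1},1)ψ` of the `n`-th Dyson term,
with the nested integrals `∫₁^{s}···` built in; `W s` is the spatial Fourier transform
of the potential at time `s`. -/
def dysonM (m R : ℝ) (W : ℝ → V3 → ℂ) : ℕ → ℝ → (V3 → ℂ) → V3 → ℂ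
  | 0, s, ψ => vHatOp m R (W s) (u0Hat m R s 1 ψ)
  | j + 1, s, ψ => vHatOp m R (W s) fun k => ∫ r in Set.Ioc (1 : ℝ) s, dysonM m R W j r ψ k

/-- The `n`-th Dyson term
`∫₁^t∫₁^{s₁}···∫₁^{s_{n−1}} Û₀(t,s₁)·V̂(s₁)···V̂(s_n)·Û₀(s_n,1)ψ ds_n···ds₁` (for `n ≥ 1`). -/
def dysonT (m R : ℝ) (W : ℝ → V3 → ℂ) (n : ℕ) (t : ℝ) (ψ : V3 → ℂ) : V3 → ℂ := fun k =>
  ∫ s in Set.Ioc (1 : ℝ) t, u0Hat m R t s (dysonM m R W (n - 1) s ψ) k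

/-!
`v(t) = e^{-μπ/2} t^{3/2} H_ν(kt)` is `t^{3/2}` times a solution of Bessel's equation of order `ν`
taken at `x = kt`, and the substitution `g(t) = c tᵖ w(kt)` turns Bessel's equation
`x²w'' + xw' + (x² - ν²)w = 0` into `t²g'' + (1 - 2p) t g' + (k²t² + p² - ν²) g = 0`.
For `p = 3/2` and `ν² = -μ² = 9/4 - (mR)²` this is the radial equation.

`H_ν` is a linear combination of `J_ν` and `J_{-ν}`, so it suffices to treat `J_α`. Writing
`J_α(x) = (x/2)^α Φ(x²/4)` with the entire series `Φ(z) = ∑ (-1)ⁿ zⁿ / (n! Γ(α + n + 1))`,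
Bessel's equation becomes `zΦ'' + (α + 1)Φ' + Φ = 0`, which is the coefficient recurrence
`(n + 1)(α + n + 1) cₙ₊₁ = -cₙ` coming from `Γ(s + 1) = s Γ(s)`.
-/

open scoped Topology

section PowerSeries

variable {a : ℕ → ℂ}

def powerSeriesSum (a : ℕ → ℂ) (z : ℝ) : ℂ := ∑' n, a n * (z : ℂ) ^ n

def derivCoeff (a : ℕ → ℂ) (n : ℕ) : ℂ := (n + 1) * a (n + 1)

lemma norm_derivCoeff (n : ℕ) : ‖derivCoeff a n‖ = (n + 1) * ‖a (n + 1)‖ := by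
  rw [derivCoeff, norm_mul]; norm_cast

lemma summable_mul_pow (ha : ∀ r : ℝ, Summable fun n => ‖a n‖ * r ^ n) (z : ℝ) :
    Summable fun n => a n * (z : ℂ) ^ n :=
  .of_norm_bounded (ha |z|) fun n => by simp [norm_pow]

lemma summable_norm_derivCoeff_mul_pow (ha : ∀ r : ℝ, Summable fun n => ‖a n‖ * r ^ n)
    (r : ℝ) : Summable fun n => ‖derivCoeff a n‖ * r ^ n := by
  set R := |r| + 1
  have hR : 1 ≤ R := by simp [R]
  refine .of_norm_bounded ((summable_nat_add_iff 1).2 (ha (2 * R))) fun n => ?_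
  have h2 : ((n : ℝ) + 1) ≤ 2 ^ (n + 1) := by exact_mod_cast (Nat.lt_two_pow_self).le
  have hpow : |r| ^ n ≤ R ^ (n + 1) :=
    (pow_le_pow_left₀ (abs_nonneg r) (by simp [R]) n).trans (pow_le_pow_right₀ hR n.le_succ)
  calc ‖‖derivCoeff a n‖ * r ^ n‖ = ((n : ℝ) + 1) * |r| ^ n * ‖a (n + 1)‖ := by
        rw [norm_mul, norm_norm, norm_derivCoeff, norm_pow, Real.norm_eq_abs]; ring
    _ ≤ 2 ^ (n + 1) * R ^ (n + 1) * ‖a (n + 1)‖ := by gcongr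
    _ = ‖a (n + 1)‖ * (2 * R) ^ (n + 1) := by rw [mul_pow]; ring

lemma hasSum_natCast_mul_mul_pow (ha : ∀ r : ℝ, Summable fun n => ‖a n‖ * r ^ n) (z : ℝ) :
    HasSum (fun n => n * a n * (z : ℂ) ^ n) (z * powerSeriesSum (derivCoeff a) z) := by
  have h := (summable_mul_pow (summable_norm_derivCoeff_mul_pow ha) z).hasSum.mul_left (z : ℂ)
  have h' := HasSum.zero_add (f := fun n : ℕ => (n : ℂ) * a n * (z : ℂ) ^ n)
    (h.congr_fun fun n => by simp only [derivCoeff]; push_cast; ring)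
  rwa [Nat.cast_zero, zero_mul, zero_mul, zero_add] at h'

lemma hasDerivAt_powerSeriesSum (ha : ∀ r : ℝ, Summable fun n => ‖a n‖ * r ^ n) (x : ℝ) :
    HasDerivAt (powerSeriesSum a) (powerSeriesSum (derivCoeff a) x) x := by
  set r := |x| + 1
  have hball : ∀ y ∈ Metric.ball x 1, |y| ≤ r := fun y hy => by
    have := abs_sub_abs_le_abs_sub y x
    rw [Metric.mem_ball, Real.dist_eq] at hy
    simp only [r]; linarith
  have hbound : Summable fun n => ‖a n‖ * (n * r ^ (n - 1)) := by
    refine (summable_nat_add_iff 1).1 ?_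
    simpa [norm_derivCoeff, mul_comm, mul_left_comm, mul_assoc] using
      summable_norm_derivCoeff_mul_pow ha r
  refine (hasDerivAt_tsum_of_isPreconnected (g := fun n (z : ℝ) => a n * (z : ℂ) ^ n)
    (g' := fun n (z : ℝ) => a n * (n * (z : ℂ) ^ (n - 1))) hbound Metric.isOpen_ball
    (convex_ball x 1).isPreconnected (fun n y _ => ?_) (fun n y hy => ?_)
    (Metric.mem_ball_self one_pos) (summable_mul_pow ha x)
    (Metric.mem_ball_self one_pos)).congr_deriv ?_
  · simpa using ((hasDerivAt_id y).ofReal_comp.pow n).const_mul (a n)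
  · simp only [norm_mul, norm_pow, Complex.norm_natCast, Complex.norm_real, Real.norm_eq_abs]
    gcongr
    exact hball y hy
  · rw [tsum_eq_zero_add' ?_]
    · simp [powerSeriesSum, derivCoeff, mul_comm, mul_assoc]
    · simpa [derivCoeff, mul_comm, mul_left_comm, mul_assoc] using
        summable_mul_pow (summable_norm_derivCoeff_mul_pow ha) x

end PowerSeries

def besselCoeff (α : ℂ) (n : ℕ) : ℂ :=
  (-1 : ℂ) ^ n / ((n.factorial : ℂ) * Complex.Gamma (α + (n : ℂ) + 1))

-- Valid also at the poles `α + n + 1 = 0`, where both sides vanish since `Γ 0 = 0` in Mathlib.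
lemma besselCoeff_succ_mul (α : ℂ) (n : ℕ) :
    besselCoeff α (n + 1) * ((n + 1) * (α + n + 1)) = -besselCoeff α n := by
  by_cases hs : α + n + 1 = 0
  · simp [besselCoeff, hs, Complex.Gamma_zero]
  have hΓ : Complex.Gamma (α + ((n + 1 : ℕ) : ℂ) + 1) =
      (α + n + 1) * Complex.Gamma (α + n + 1) := by
    rw [← Complex.Gamma_add_one _ hs]; push_cast; ring_nf
  by_cases hG : Complex.Gamma (α + n + 1) = 0
  · simp only [besselCoeff]
    rw [hΓ, hG]
    simp
  simp only [besselCoeff, hΓ, Nat.factorial_succ]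
  push_cast
  field_simp
  ring

lemma summable_norm_besselCoeff_mul_pow (α : ℂ) (r : ℝ) :
    Summable fun n => ‖besselCoeff α n‖ * r ^ n := by
  refine summable_of_ratio_norm_eventually_le (r := 1 / 2) (by norm_num) ?_
  filter_upwards [eventually_ge_atTop ⌈‖α‖ + 2 * |r|⌉₊] with n hn
  have hn' : ‖α‖ + 2 * |r| ≤ n := Nat.ceil_le.1 hn
  have hlow : 1 ≤ ‖α + n + 1‖ := by
    have := norm_sub_norm_le ((n : ℂ) + 1) (-α)
    rw [sub_neg_eq_add, norm_neg, add_comm ((n : ℂ) + 1), ← add_assoc] at this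
    have h1 : ‖(n : ℂ) + 1‖ = n + 1 := by norm_cast
    linarith [abs_nonneg r]
  have hrec := congrArg norm (besselCoeff_succ_mul α n)
  rw [norm_mul, norm_mul, norm_neg, show ‖(n : ℂ) + 1‖ = n + 1 by norm_cast] at hrec
  have hc := norm_nonneg (besselCoeff α (n + 1))
  have key : 2 * |r| * ‖besselCoeff α (n + 1)‖ ≤ ‖besselCoeff α n‖ := by
    have h2r : 2 * |r| ≤ n + 1 := by linarith [norm_nonneg α]
    calc 2 * |r| * ‖besselCoeff α (n + 1)‖ ≤ (n + 1) * 1 * ‖besselCoeff α (n + 1)‖ := by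
          rw [mul_one]; exact mul_le_mul_of_nonneg_right h2r hc
      _ ≤ (n + 1) * ‖α + n + 1‖ * ‖besselCoeff α (n + 1)‖ := by gcongr
      _ = ‖besselCoeff α n‖ := by rw [← hrec]; ring
  simp only [norm_mul, norm_pow, Real.norm_eq_abs, abs_norm, pow_succ]
  nlinarith [mul_le_mul_of_nonneg_right key (pow_nonneg (abs_nonneg r) n)]

lemma deriv_deriv_eq_of_hasDerivAt {F : Type*} [NormedAddCommGroup F] [NormedSpace ℝ F]
    {f f' : ℝ → F} {f'' : F} {U : Set ℝ} {x : ℝ} (hU : IsOpen U) (hx : x ∈ U)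
    (hf : ∀ y ∈ U, HasDerivAt f (f' y) y) (hf' : HasDerivAt f' f'' x) :
    deriv (deriv f) x = f'' :=
  ((eventuallyEq_of_mem (hU.mem_nhds hx) fun y hy => (hf y hy).deriv).deriv_eq).trans hf'.deriv

def IsBesselSolution (α : ℂ) (w : ℝ → ℂ) : Prop :=
  ∀ x : ℝ, 0 < x → DifferentiableAt ℝ w x ∧ DifferentiableAt ℝ (deriv w) x ∧
    (x : ℂ) ^ 2 * deriv (deriv w) x + x * deriv w x + ((x : ℂ) ^ 2 - α ^ 2) * w x = 0

namespace IsBesselSolution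

variable {α : ℂ} {w : ℝ → ℂ}

lemma of_hasDerivAt {w' w'' : ℝ → ℂ} (hw : ∀ x : ℝ, 0 < x → HasDerivAt w (w' x) x)
    (hw' : ∀ x : ℝ, 0 < x → HasDerivAt w' (w'' x) x)
    (hode : ∀ x : ℝ, 0 < x → (x : ℂ) ^ 2 * w'' x + x * w' x + ((x : ℂ) ^ 2 - α ^ 2) * w x = 0) :
    IsBesselSolution α w := by
  intro x hx
  have hderiv : deriv w =ᶠ[𝓝 x] w' :=
    eventuallyEq_of_mem (Ioi_mem_nhds hx) fun y hy => (hw y hy).deriv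
  refine ⟨(hw x hx).differentiableAt, ?_, ?_⟩
  · exact (hw' x hx).differentiableAt.congr_of_eventuallyEq hderiv
  · rw [deriv_deriv_eq_of_hasDerivAt isOpen_Ioi hx (fun y hy => hw y hy) (hw' x hx),
      (hw x hx).deriv]
    exact hode x hx

lemma of_neg_order (hw : IsBesselSolution (-α) w) : IsBesselSolution α w := by
  simpa [IsBesselSolution, neg_sq] using hw

lemma congr {v : ℝ → ℂ} (hw : IsBesselSolution α w) (hv : Set.EqOn w v (Set.Ioi 0)) :
    IsBesselSolution α v := by
  intro x hx
  have h : w =ᶠ[𝓝 x] v := eventuallyEq_of_mem (Ioi_mem_nhds hx) hv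
  obtain ⟨hd, hd', hode⟩ := hw x hx
  refine ⟨hd.congr_of_eventuallyEq h.symm, hd'.congr_of_eventuallyEq h.deriv.symm, ?_⟩
  rwa [← h.deriv.deriv_eq, ← h.deriv_eq, ← hv hx]

lemma mul_add_mul {v : ℝ → ℂ} (hv : IsBesselSolution α v) (hw : IsBesselSolution α w)
    (a b : ℂ) : IsBesselSolution α fun x => a * v x + b * w x := by
  refine of_hasDerivAt (w' := fun x => a * deriv v x + b * deriv w x)
    (w'' := fun x => a * deriv (deriv v) x + b * deriv (deriv w) x)
    (fun x hx => ?_) (fun x hx => ?_) (fun x hx => ?_)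
  · exact ((hv x hx).1.hasDerivAt.const_mul a).add ((hw x hx).1.hasDerivAt.const_mul b)
  · exact ((hv x hx).2.1.hasDerivAt.const_mul a).add ((hw x hx).2.1.hasDerivAt.const_mul b)
  · linear_combination a * (hv x hx).2.2 + b * (hw x hx).2.2

lemma hasDerivAt_comp_const_mul (hw : IsBesselSolution α w) {k s : ℝ} (hk : 0 < k)
    (hs : 0 < s) : HasDerivAt (fun s => w (k * s)) (k * deriv w (k * s)) s := by
  refine (((hw _ (mul_pos hk hs)).1.hasDerivAt).scomp s
    ((hasDerivAt_id' s).const_mul k)).congr_deriv ?_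
  simp [Complex.real_smul]

lemma hasDerivAt_deriv_comp_const_mul (hw : IsBesselSolution α w) {k s : ℝ} (hk : 0 < k)
    (hs : 0 < s) : HasDerivAt (fun s => deriv w (k * s)) (k * deriv (deriv w) (k * s)) s := by
  refine (((hw _ (mul_pos hk hs)).2.1.hasDerivAt).scomp s
    ((hasDerivAt_id' s).const_mul k)).congr_deriv ?_
  simp [Complex.real_smul]

lemma ode_const_mul_rpow_mul_comp (hw : IsBesselSolution α w) (c : ℂ) (p : ℝ) {k t : ℝ}
    (hk : 0 < k) (ht : 0 < t) :
    (t : ℂ) ^ 2 * deriv (deriv fun s : ℝ => c * ((s ^ p : ℝ) : ℂ) * w (k * s)) t +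
      (1 - 2 * p) * t * deriv (fun s : ℝ => c * ((s ^ p : ℝ) : ℂ) * w (k * s)) t +
      (((k * t : ℝ) : ℂ) ^ 2 + (p : ℂ) ^ 2 - α ^ 2) * (c * ((t ^ p : ℝ) : ℂ) * w (k * t)) = 0 := by
  have hpow : ∀ (q s : ℝ), 0 < s →
      HasDerivAt (fun s : ℝ => ((s ^ q : ℝ) : ℂ)) (q * ((s ^ (q - 1) : ℝ) : ℂ)) s :=
    fun q s hs => by
      simpa using (Real.hasDerivAt_rpow_const (p := q) (Or.inl hs.ne')).ofReal_comp
  set g1 : ℝ → ℂ := fun s => c * (p * ((s ^ (p - 1) : ℝ) : ℂ) * w (k * s) +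
    ((s ^ p : ℝ) : ℂ) * (k * deriv w (k * s)))
  have hg : ∀ s ∈ Set.Ioi (0 : ℝ),
      HasDerivAt (fun s : ℝ => c * ((s ^ p : ℝ) : ℂ) * w (k * s)) (g1 s) s := fun s hs => by
    simpa [g1, mul_assoc] using
      (((hpow p s hs).mul (hw.hasDerivAt_comp_const_mul hk hs)).const_mul c)
  have hg1 := (((((hpow (p - 1) t ht).const_mul (p : ℂ)).mul
    (hw.hasDerivAt_comp_const_mul hk ht)).add ((hpow p t ht).mul
    ((hw.hasDerivAt_deriv_comp_const_mul hk ht).const_mul (k : ℂ)))).const_mul c)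
  rw [deriv_deriv_eq_of_hasDerivAt isOpen_Ioi ht hg hg1, (hg t ht).deriv]
  have hode := (hw (k * t) (mul_pos hk ht)).2.2
  have h1 : t ^ (p - 1) = t ^ (p - 1 - 1) * t := by rw [← Real.rpow_add_one ht.ne']; ring_nf
  have h0 : t ^ p = t ^ (p - 1) * t := by rw [← Real.rpow_add_one ht.ne']; ring_nf
  -- writing `tᵖ = t^{p-2} t²` and `t^{p-1} = t^{p-2} t` makes the identity polynomial
  simp only [g1]
  rw [h0, h1]
  push_cast at hode ⊢
  linear_combination c * ((t ^ (p - 1 - 1) : ℝ) : ℂ) * (t : ℂ) ^ 2 * hode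

end IsBesselSolution

lemma hasDerivAt_cexp_mul_log_half (α : ℂ) {x : ℝ} (hx : 0 < x) :
    HasDerivAt (fun y : ℝ => Complex.exp (α * Real.log (y / 2)))
      (α / x * Complex.exp (α * Real.log (x / 2))) x := by
  have hlog : HasDerivAt (fun y : ℝ => Real.log (y / 2)) x⁻¹ x :=
    (((hasDerivAt_id' x).div_const 2).log (by positivity)).congr_deriv (by field_simp)
  refine ((hlog.ofReal_comp).const_mul α).cexp.congr_deriv ?_
  push_cast
  ring

lemma HasDerivAt.comp_sq_half {Φ : ℝ → ℂ} {φ : ℂ} {x : ℝ} (h : HasDerivAt Φ φ ((x / 2) ^ 2)) :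
    HasDerivAt (fun y : ℝ => Φ ((y / 2) ^ 2)) (x / 2 * φ) x := by
  refine (h.scomp x (((hasDerivAt_id' x).div_const 2).pow 2)).congr_deriv ?_
  rw [Complex.real_smul]
  push_cast
  ring

lemma hasDerivAt_const_div_ofReal (α : ℂ) {x : ℝ} (hx : x ≠ 0) :
    HasDerivAt (fun y : ℝ => α / (y : ℂ)) (-α / (x : ℂ) ^ 2) x := by
  have := ((hasDerivAt_inv hx).ofReal_comp).const_mul α
  refine (this.congr_deriv (by push_cast; ring)).congr_of_eventuallyEq ?_
  filter_upwards with y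
  push_cast
  ring

lemma isBesselSolution_cexp_mul_log_half_mul {α : ℂ} {Φ Φ' Φ'' : ℝ → ℂ}
    (hΦ : ∀ z : ℝ, 0 < z → HasDerivAt Φ (Φ' z) z)
    (hΦ' : ∀ z : ℝ, 0 < z → HasDerivAt Φ' (Φ'' z) z)
    (hode : ∀ z : ℝ, 0 < z → z * Φ'' z + (α + 1) * Φ' z + Φ z = 0) :
    IsBesselSolution α fun x => Complex.exp (α * Real.log (x / 2)) * Φ ((x / 2) ^ 2) := by
  set P : ℝ → ℂ := fun x => Complex.exp (α * Real.log (x / 2))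
  set K : ℝ → ℂ := fun x => α / x * Φ ((x / 2) ^ 2) + x / 2 * Φ' ((x / 2) ^ 2)
  have hq : ∀ x : ℝ, 0 < x → 0 < (x / 2) ^ 2 := fun x hx => by positivity
  have hK : ∀ x : ℝ, 0 < x → HasDerivAt K (-α / (x : ℂ) ^ 2 * Φ ((x / 2) ^ 2)
      + α / x * (x / 2 * Φ' ((x / 2) ^ 2)) + (1 / 2 * Φ' ((x / 2) ^ 2)
      + x / 2 * (x / 2 * Φ'' ((x / 2) ^ 2)))) x := fun x hx => by
    have hhalf : HasDerivAt (fun y : ℝ => (y : ℂ) / 2) (1 / 2) x :=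
      (hasDerivAt_id' x).ofReal_comp.div_const 2
    exact ((hasDerivAt_const_div_ofReal α hx.ne').mul (hΦ _ (hq x hx)).comp_sq_half).add
      (hhalf.mul (hΦ' _ (hq x hx)).comp_sq_half)
  refine IsBesselSolution.of_hasDerivAt (w' := fun x => P x * K x)
    (fun x hx => ?_) (fun x hx => ((hasDerivAt_cexp_mul_log_half α hx).mul (hK x hx))) ?_
  · refine ((hasDerivAt_cexp_mul_log_half α hx).mul (hΦ _ (hq x hx)).comp_sq_half).congr_deriv ?_
    simp only [P, K]
    ring
  · intro x hx
    have hx' : (x : ℂ) ≠ 0 := by exact_mod_cast hx.ne'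
    have h := hode _ (hq x hx)
    simp only [P, K]
    generalize hz : (x / 2) ^ 2 = z at h ⊢
    have hzC : (z : ℂ) = (x : ℂ) ^ 2 / 4 := by rw [← hz]; push_cast; ring
    rw [hzC] at h
    field_simp
    linear_combination (4 * x ^ 2 * Complex.exp (α * Real.log (x / 2))) * h

lemma besselCoeff_ode (α : ℂ) (z : ℝ) :
    z * powerSeriesSum (derivCoeff (derivCoeff (besselCoeff α))) z +
      (α + 1) * powerSeriesSum (derivCoeff (besselCoeff α)) z +
      powerSeriesSum (besselCoeff α) z = 0 := by
  have hc := summable_norm_besselCoeff_mul_pow α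
  have hc' := summable_norm_derivCoeff_mul_pow hc
  have h := ((hasSum_natCast_mul_mul_pow hc' z).add
    ((summable_mul_pow hc' z).hasSum.mul_left (α + 1))).add (summable_mul_pow hc z).hasSum
  refine h.unique (hasSum_zero.congr_fun fun n => ?_)
  have hrec := besselCoeff_succ_mul α n
  simp only [derivCoeff] at hrec ⊢
  linear_combination (z : ℂ) ^ n * hrec

lemma besselJ_eq (α : ℂ) {x : ℝ} (hx : 0 < x) :
    besselJ α x =
      Complex.exp (α * Real.log (x / 2)) * powerSeriesSum (besselCoeff α) ((x / 2) ^ 2) := by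
  rw [besselJ, powerSeriesSum, ← tsum_mul_left]
  refine tsum_congr fun n => ?_
  have hexp : Complex.exp (2 * Real.log (x / 2)) = (((x / 2) ^ 2 : ℝ) : ℂ) := by
    rw [two_mul, Complex.exp_add, ← Complex.ofReal_exp, Real.exp_log (by positivity)]
    push_cast
    ring
  rw [besselCoeff, add_mul, Complex.exp_add, mul_assoc, mul_left_comm (2 : ℂ),
    Complex.exp_nat_mul, hexp]
  ring

lemma isBesselSolution_besselJ (α : ℂ) : IsBesselSolution α (besselJ α) := by
  have hc := summable_norm_besselCoeff_mul_pow α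
  have hc' := summable_norm_derivCoeff_mul_pow hc
  refine (isBesselSolution_cexp_mul_log_half_mul (fun z _ => hasDerivAt_powerSeriesSum hc z)
    (fun z _ => hasDerivAt_powerSeriesSum hc' z) fun z _ => besselCoeff_ode α z).congr
    fun x hx => (besselJ_eq α hx).symm

lemma isBesselSolution_hankel1 (α : ℂ) : IsBesselSolution α (hankel1 α) := by
  have h := ((isBesselSolution_besselJ (-α)).of_neg_order.mul_add_mul
    (isBesselSolution_besselJ α) (Complex.I * Complex.sin (α * Real.pi))⁻¹
    (-(Complex.exp (-(Complex.I * Real.pi * α)) * (Complex.I * Complex.sin (α * Real.pi))⁻¹)))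
  refine h.congr fun x _ => ?_
  simp only [hankel1]
  ring

theorem mode_function_solves_radial_ODE_general (m R : ℝ)
    (hmR : 3 / 2 < m * R) (t k : ℝ) (ht : 0 < t) (hk : 0 < k) :
    (t : ℂ) ^ 2 * deriv (fun s => deriv (fun r => modeV m R r k) s) t -
        2 * (t : ℂ) * deriv (fun s => modeV m R s k) t +
        (((k * t) ^ 2 + (m * R) ^ 2 : ℝ) : ℂ) * modeV m R t k = 0 := by
  have hν : modeNu m R ^ 2 = 9 / 4 - ((m * R : ℝ) : ℂ) ^ 2 := by
    have hμ : modeMu m R ^ 2 = (m * R) ^ 2 - 9 / 4 := Real.sq_sqrt (by nlinarith)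
    rw [modeNu, mul_pow, Complex.I_sq, ← Complex.ofReal_pow, hμ]
    push_cast
    ring
  have key := (isBesselSolution_hankel1 (modeNu m R)).ode_const_mul_rpow_mul_comp
    (Real.exp (-(modeMu m R * Real.pi / 2)) : ℂ) (3 / 2) hk ht
  rw [hν] at key
  simp only [modeV]
  push_cast at key ⊢
  linear_combination key

/-- the mode function solves the radial de Sitter Klein–Gordon ODE
`t²·v'' − 2t·v' + ((kt)² + (mR)²)·v = 0` for all `t, k > 0`. -/
theorem mode_function_solves_radial_ODE (m R : ℝ) (hm : 0 < m) (hR : 0 < R)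
    (hmR : 3 / 2 < m * R) (t k : ℝ) (ht : 0 < t) (hk : 0 < k) :
    (t : ℂ) ^ 2 * deriv (fun s => deriv (fun r => modeV m R r k) s) t -
        2 * (t : ℂ) * deriv (fun s => modeV m R s k) t +
        (((k * t) ^ 2 + (m * R) ^ 2 : ℝ) : ℂ) * modeV m R t k = 0 :=
  mode_function_solves_radial_ODE_general m R hmR t k ht hk
end
end

section
/- For every Schwartz function g : ℝ³ → ℂ, the twelve-dimensional integral ∫_{ℝ³}∫_{ℝ³}∫_{ℝ³}∫_{ℝ³} (1+|p⃗₁|)^{−1}·|g(p⃗₁−p⃗₂)|·(1+|p⃗₂|)^{−1}·|g(p⃗₂−p⃗₃)|·(1+|p⃗₃|)^{−1}·|g(p⃗₃−p⃗₄)|·(1+|p⃗₄|)^{−1}·|g(p⃗₄−p⃗₁)| dp⃗₁ dp⃗₂ dp⃗₃ dp⃗₄ is finite. (This is the estimate showing that the transformed potential operator V̂(s) has finite Schatten-4 norm, used to control the higher-order Dyson terms in Hilbert–Schmidt norm.) -/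
open Complex MeasureTheory Filter
open scoped RealInnerProductSpace

noncomputable section

/-!
Peetre's inequality `(1 + |q|)⁻¹ ≤ (1 + |p - q|)(1 + |p|)⁻¹`, applied along the cycle
`p₁ → p₂ → p₃ → p₄`, moves all four weights onto `p₁` at the price of polynomial factors in the
differences `p₁ - p₂, p₂ - p₃, p₃ - p₄, p₄ - p₁`, which the rapid decay of `g` absorbs. The
resulting majorant is a product of integrable functions of `p₁, p₁ - p₂, p₂ - p₃, p₃ - p₄` times
the bounded factor coming from `p₄ - p₁`, and this change of variables preserves Lebesgue measure.
-/

section SubChain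

variable {G : Type*} [AddGroup G] [MeasurableSpace G] [MeasurableAdd₂ G] [MeasurableNeg G]
  {μ : Measure G} [SFinite μ] [μ.IsAddLeftInvariant] [μ.IsNegInvariant]

theorem measurePreserving_prod_self_sub :
    MeasurePreserving (fun z : G × G => (z.1, z.1 - z.2)) (μ.prod μ) (μ.prod μ) := by
  simp_rw [sub_eq_add_neg]
  exact (measurePreserving_prod_add μ μ).comp
    ((MeasurePreserving.id μ).prod (Measure.measurePreserving_neg μ))

theorem measurePreserving_sub_left_prod_sub (b : G) :
    MeasurePreserving (fun z : G × G => (b - z.1, z.1 - z.2)) (μ.prod μ) (μ.prod μ) :=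
  ((Measure.measurePreserving_sub_left μ b).prod (MeasurePreserving.id μ)).comp
    measurePreserving_prod_self_sub

theorem measurePreserving_sub_chain :
    MeasurePreserving
      (fun p : (G × G) × G × G => ((p.1.1, p.1.1 - p.1.2), (p.1.2 - p.2.1, p.2.1 - p.2.2)))
      ((μ.prod μ).prod (μ.prod μ)) ((μ.prod μ).prod (μ.prod μ)) :=
  measurePreserving_prod_self_sub.skew_product
    (g := fun q r : G × G => (q.2 - r.1, r.1 - r.2)) (by fun_prop)
    (ae_of_all _ fun q => (measurePreserving_sub_left_prod_sub q.2).map_eq)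

theorem MeasureTheory.Integrable.mul_sub_chain {R : Type*} [NormedRing R] {f₀ f₁ f₂ f₃ : G → R}
    (h₀ : Integrable f₀ μ) (h₁ : Integrable f₁ μ) (h₂ : Integrable f₂ μ) (h₃ : Integrable f₃ μ) :
    Integrable (fun p : (G × G) × G × G =>
      f₀ p.1.1 * f₁ (p.1.1 - p.1.2) * (f₂ (p.1.2 - p.2.1) * f₃ (p.2.1 - p.2.2)))
      ((μ.prod μ).prod (μ.prod μ)) := by
  have h := (h₀.mul_prod h₁).mul_prod (h₂.mul_prod h₃)
  exact (measurePreserving_sub_chain.integrable_comp h.aestronglyMeasurable).2 h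

end SubChain

section Weights

variable {E : Type*} [SeminormedAddGroup E]

theorem inv_one_add_norm_le_one_add_norm_sub_mul (x y : E) :
    (1 + ‖y‖)⁻¹ ≤ (1 + ‖x - y‖) * (1 + ‖x‖)⁻¹ := by
  rw [← div_eq_mul_inv, le_div_iff₀ (by positivity), inv_mul_le_iff₀ (by positivity)]
  have := norm_le_norm_sub_add x y
  nlinarith [norm_nonneg (x - y), norm_nonneg y]

theorem inv_one_add_norm_cycle_le (a b c d : E) :
    (1 + ‖a‖)⁻¹ * (1 + ‖b‖)⁻¹ * (1 + ‖c‖)⁻¹ * (1 + ‖d‖)⁻¹ ≤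
      (1 + ‖a‖)⁻¹ ^ 4 * (1 + ‖a - b‖) ^ 3 * (1 + ‖b - c‖) ^ 3 * (1 + ‖c - d‖) ^ 3 *
        (1 + ‖d - a‖) ^ 3 := by
  have hb := inv_one_add_norm_le_one_add_norm_sub_mul a b
  have hc : (1 + ‖c‖)⁻¹ ≤ (1 + ‖b - c‖) * ((1 + ‖a - b‖) * (1 + ‖a‖)⁻¹) :=
    (inv_one_add_norm_le_one_add_norm_sub_mul b c).trans (by gcongr)
  have hd : (1 + ‖d‖)⁻¹ ≤ (1 + ‖c - d‖) * ((1 + ‖b - c‖) * ((1 + ‖a - b‖) * (1 + ‖a‖)⁻¹)) :=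
    (inv_one_add_norm_le_one_add_norm_sub_mul c d).trans (by gcongr)
  calc _ ≤ (1 + ‖a‖)⁻¹ * ((1 + ‖a - b‖) * (1 + ‖a‖)⁻¹) *
        ((1 + ‖b - c‖) * ((1 + ‖a - b‖) * (1 + ‖a‖)⁻¹)) *
        ((1 + ‖c - d‖) * ((1 + ‖b - c‖) * ((1 + ‖a - b‖) * (1 + ‖a‖)⁻¹))) := by gcongr
    _ = (1 + ‖a‖)⁻¹ ^ 4 * (1 + ‖a - b‖) ^ 3 * (1 + ‖b - c‖) ^ 2 * (1 + ‖c - d‖) ^ 1 *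
        (1 + ‖d - a‖) ^ 0 := by ring
    _ ≤ _ := by gcongr <;> simp

theorem inv_one_add_norm_mul_cycle_le (a b c d : E) {φ : E → ℝ} (hφ : ∀ x, 0 ≤ φ x) :
    (1 + ‖a‖)⁻¹ * φ (a - b) * ((1 + ‖b‖)⁻¹ * φ (b - c)) * ((1 + ‖c‖)⁻¹ * φ (c - d)) *
        ((1 + ‖d‖)⁻¹ * φ (d - a)) ≤
      (1 + ‖a‖)⁻¹ ^ 4 * ((1 + ‖a - b‖) ^ 3 * φ (a - b)) * ((1 + ‖b - c‖) ^ 3 * φ (b - c)) *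
        ((1 + ‖c - d‖) ^ 3 * φ (c - d)) * ((1 + ‖d - a‖) ^ 3 * φ (d - a)) := by
  have hφ4 : 0 ≤ φ (a - b) * φ (b - c) * φ (c - d) * φ (d - a) := by
    have := hφ (a - b); have := hφ (b - c); have := hφ (c - d); have := hφ (d - a)
    positivity
  calc _ = (1 + ‖a‖)⁻¹ * (1 + ‖b‖)⁻¹ * (1 + ‖c‖)⁻¹ * (1 + ‖d‖)⁻¹ *
        (φ (a - b) * φ (b - c) * φ (c - d) * φ (d - a)) := by ring
    _ ≤ (1 + ‖a‖)⁻¹ ^ 4 * (1 + ‖a - b‖) ^ 3 * (1 + ‖b - c‖) ^ 3 * (1 + ‖c - d‖) ^ 3 *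
        (1 + ‖d - a‖) ^ 3 * (φ (a - b) * φ (b - c) * φ (c - d) * φ (d - a)) :=
      mul_le_mul_of_nonneg_right (inv_one_add_norm_cycle_le a b c d) hφ4
    _ = _ := by ring

end Weights

theorem integrable_inv_one_add_norm_pow {E : Type*} [NormedAddCommGroup E] [NormedSpace ℝ E]
    [FiniteDimensional ℝ E] [MeasurableSpace E] [BorelSpace E] {μ : Measure E}
    [μ.IsAddHaarMeasure] {n : ℕ} (hn : Module.finrank ℝ E < n) :
    Integrable (fun x : E => (1 + ‖x‖)⁻¹ ^ n) μ := by
  refine (integrable_one_add_norm (r := n) (by exact_mod_cast hn)).congr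
    (ae_of_all _ fun x => ?_)
  simp only
  rw [Real.rpow_neg (by positivity), Real.rpow_natCast, inv_pow]

theorem SchwartzMap.exists_one_add_norm_pow_mul_le_inv_pow {E F : Type*} [NormedAddCommGroup E]
    [NormedSpace ℝ E] [NormedAddCommGroup F] [NormedSpace ℝ F] (f : SchwartzMap E F) (k m : ℕ) :
    ∃ C, 0 ≤ C ∧ ∀ x, (1 + ‖x‖) ^ k * ‖f x‖ ≤ C * (1 + ‖x‖)⁻¹ ^ m := by
  set C := 2 ^ (k + m) * (Finset.Iic (k + m, 0)).sup (fun i => SchwartzMap.seminorm ℝ i.1 i.2) f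
  have hC (x : E) : (1 + ‖x‖) ^ (k + m) * ‖f x‖ ≤ C := by
    simpa using one_add_le_sup_seminorm_apply (𝕜 := ℝ) (m := (k + m, 0)) le_rfl le_rfl f x
  refine ⟨C, by positivity, fun x => ?_⟩
  have hx : (1 + ‖x‖) ^ m ≠ 0 := by positivity
  calc (1 + ‖x‖) ^ k * ‖f x‖ = (1 + ‖x‖) ^ (k + m) * ‖f x‖ * (1 + ‖x‖)⁻¹ ^ m := by
        rw [inv_pow, pow_add]; field_simp
    _ ≤ C * (1 + ‖x‖)⁻¹ ^ m := by gcongr; exact hC x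

/-- for a Schwartz function `g` on `ℝ³`, the twelve-dimensional integral
`∫∫∫∫ (1+|p₁|)⁻¹|g(p₁−p₂)|(1+|p₂|)⁻¹|g(p₂−p₃)|(1+|p₃|)⁻¹|g(p₃−p₄)|(1+|p₄|)⁻¹|g(p₄−p₁)|`
is finite. -/
theorem schatten_four_integral_finite (g : SchwartzMap V3 ℂ) :
    Integrable (fun p : (V3 × V3) × V3 × V3 =>
      (1 + ‖p.1.1‖)⁻¹ * ‖g (p.1.1 - p.1.2)‖ * ((1 + ‖p.1.2‖)⁻¹ * ‖g (p.1.2 - p.2.1)‖) *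
        ((1 + ‖p.2.1‖)⁻¹ * ‖g (p.2.1 - p.2.2)‖) * ((1 + ‖p.2.2‖)⁻¹ * ‖g (p.2.2 - p.1.1)‖))
      volume := by
  obtain ⟨C, hC0, hC⟩ := g.exists_one_add_norm_pow_mul_le_inv_pow 3 4
  set w : V3 → ℝ := fun x => (1 + ‖x‖)⁻¹ ^ 4
  have hw : Integrable w := integrable_inv_one_add_norm_pow (by simp)
  have hw_le_one (x : V3) : w x ≤ 1 :=
    pow_le_one₀ (by positivity) (inv_le_one_of_one_le₀ (by simp))
  have hC_bdd (x : V3) : (1 + ‖x‖) ^ 3 * ‖g x‖ ≤ C :=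
    (hC x).trans (mul_le_of_le_one_right hC0 (hw_le_one x))
  have hdom := (hw.mul_sub_chain (hw.const_mul C) (hw.const_mul C) (hw.const_mul C)).const_mul C
  refine hdom.mono' (by fun_prop) (ae_of_all _ fun ⟨⟨a, b⟩, c, d⟩ => ?_)
  rw [Real.norm_of_nonneg (by positivity)]
  calc _ ≤ _ := inv_one_add_norm_mul_cycle_le a b c d (φ := fun x => ‖g x‖) fun _ => norm_nonneg _
    _ ≤ w a * (C * w (a - b)) * (C * w (b - c)) * (C * w (c - d)) * C := by
      gcongr _ * ?_ * ?_ * ?_ * ?_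
      exacts [hC _, hC _, hC _, hC_bdd _]
    _ = _ := by ring
end
end
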